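/- With the QSP unitary U of the previous construction, unitarity implies the Laurent polynomial identity F(ω)F(1/ω) + G(ω)G(1/ω) = 1 for all ω on the complex unit circle. -/

import Mathlib

/-! On the unit circle `conj ω = ω⁻¹`, so real coefficients give `conj (F ω) = F ω⁻¹` and
`conj (G ω⁻¹) = G ω`; the identity is then the statement that the first column of the unitary
matrix has unit norm. -/

open Complex Matrix ComplexConjugate

theorem conj_sum_ofReal_mul_zpow (s : Finset ℤ) (c : ℤ → ℝ) (z : ℂ) :
    conj (∑ n ∈ s, (c n : ℂ) * z ^ n) = ∑ n ∈ s, (c n : ℂ) * conj z ^ n := by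
  simp only [map_sum, map_mul, map_zpow₀, conj_ofReal]

theorem Matrix.star_mul_self_add_star_mul_self_of_mem_unitaryGroup {R : Type*} [CommRing R]
    [StarRing R] {a b c d : R} (h : !![a, b; c, d] ∈ unitaryGroup (Fin 2) R) :
    star a * a + star c * c = 1 := by
  have h00 := congrFun (congrFun (mem_unitaryGroup_iff'.mp h) 0) 0
  simpa [Matrix.mul_apply, Fin.sum_univ_two] using h00

/-- Unitarity of the QSP block-encoding implies `F(ω)F(1/ω) + G(ω)G(1/ω) = 1` on the unit
circle. -/
theorem qsp_unitarity_identity (d : ℕ) (fc gc : ℤ → ℝ)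
    (F G : ℂ → ℂ)
    (hF : ∀ ω : ℂ, F ω = ∑ n ∈ Finset.Icc (-(d : ℤ)) d, (fc n : ℂ) * ω ^ n)
    (hG : ∀ ω : ℂ, G ω = ∑ n ∈ Finset.Icc (-(d : ℤ)) d, (gc n : ℂ) * ω ^ n)
    (hunitary : ∀ ω : ℂ, ‖ω‖ = 1 →
      (!![F ω, Complex.I * G ω; Complex.I * G ω⁻¹, F ω⁻¹] : Matrix (Fin 2) (Fin 2) ℂ)
        ∈ Matrix.unitaryGroup (Fin 2) ℂ) :
    ∀ ω : ℂ, ‖ω‖ = 1 → F ω * F ω⁻¹ + G ω * G ω⁻¹ = 1 := by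
  intro ω hω
  have hinv : ω⁻¹ = conj ω := Complex.inv_eq_conj hω
  have hF_conj : conj (F ω) = F ω⁻¹ := by
    rw [hF, hF, conj_sum_ofReal_mul_zpow, hinv]
  have hG_conj : conj (G ω⁻¹) = G ω := by
    rw [hG, hG, conj_sum_ofReal_mul_zpow, hinv, conj_conj]
  have hcol := star_mul_self_add_star_mul_self_of_mem_unitaryGroup (hunitary ω hω)
  simp only [star_mul', Complex.star_def, conj_I, hF_conj, hG_conj] at hcol
  linear_combination hcol + G ω * G ω⁻¹ * I_sq
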